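/- Let t ∈ [0,1) and N ∈ (1/2)ℤ. There exists a constant C ≥ 0 such that |α_N(l)·((1+q²)(1−t))^{−1/2} − 1| ≤ C·q^{2l} for all real l ≥ max(|N|, 1). In particular, α_N(l) → ((1+q²)(1−t))^{1/2} as l → ∞. -/

import Mathlib

noncomputable section

open scoped BigOperators

namespace Podles

/-- The `q`-number `[x] = (q^x - q^(-x))/(q - q⁻¹)`. -/
def qn (q x : ℝ) : ℝ := (q ^ x - q ^ (-x)) / (q - q⁻¹)

def alphaN (q t N l : ℝ) : ℝ :=
  Real.sqrt (qn q 2 * qn q (l + N) * qn q (l - N) * qn q (2 * l)) /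
      (Real.sqrt (qn q (2 * l + 1)) * qn q l) *
    Real.sqrt (1 - t + q ^ (-(2 * N)) * ((qn q (2 * l))⁻¹) ^ 2 * qn q l ^ 2 *
      (t - 1 + q ^ (2 * N)) ^ 2)

def betaN (q t N l : ℝ) : ℝ :=
  (Real.sign N * qn q (2 * |N|) * (q⁻¹ + q - q ^ Real.sign N * t) +
      t * (q - q⁻¹) * (qn q |N| * qn q (|N| + 1) - qn q l * qn q (l + 1))) /
    (q * qn q (2 * l + 2))

/-- The coefficients `α^ν_i(l, m; N)`, with the convention that they vanish
whenever `l + ν < |N|` or `|m + i| > l + ν`. -/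
def coef (q t : ℝ) (i ν : ℤ) (N l m : ℝ) : ℝ :=
  if l + (ν : ℝ) < |N| ∨ l + (ν : ℝ) < |m + (i : ℝ)| then 0
  else if i = 1 ∧ ν = 1 then
    q ^ (-l + m) * Real.sqrt (qn q (l + m + 1)) * Real.sqrt (qn q (l + m + 2)) *
      (Real.sqrt (qn q (2 * l + 1)))⁻¹ * (Real.sqrt (qn q (2 * l + 2)))⁻¹ * alphaN q t N (l + 1)
  else if i = 1 ∧ ν = 0 then
    -(q ^ (m + 2)) * Real.sqrt (qn q (l - m)) * Real.sqrt (qn q (l + m + 1)) *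
      Real.sqrt (qn q 2) * (qn q (2 * l))⁻¹ * betaN q t N l
  else if i = 1 ∧ ν = -1 then
    -(q ^ (l + m + 1)) * Real.sqrt (qn q (l - m - 1)) * Real.sqrt (qn q (l - m)) *
      (Real.sqrt (qn q (2 * l - 1)))⁻¹ * (Real.sqrt (qn q (2 * l)))⁻¹ * alphaN q t N l
  else if i = 0 ∧ ν = 1 then
    q ^ m * Real.sqrt (qn q (l - m + 1)) * Real.sqrt (qn q (l + m + 1)) * Real.sqrt (qn q 2) *
      (Real.sqrt (qn q (2 * l + 1)))⁻¹ * (Real.sqrt (qn q (2 * l + 2)))⁻¹ * alphaN q t N (l + 1)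
  else if i = 0 ∧ ν = 0 then
    (qn q (2 * l))⁻¹ *
      (qn q (l - m + 1) * qn q (l + m) - q ^ (2 : ℝ) * qn q (l - m) * qn q (l + m + 1)) *
      betaN q t N l
  else if i = 0 ∧ ν = -1 then
    q ^ m * Real.sqrt (qn q (l - m)) * Real.sqrt (qn q (l + m)) * Real.sqrt (qn q 2) *
      (Real.sqrt (qn q (2 * l - 1)))⁻¹ * (Real.sqrt (qn q (2 * l)))⁻¹ * alphaN q t N l
  else if i = -1 ∧ ν = 1 then
    q ^ (l + m) * Real.sqrt (qn q (l - m + 1)) * Real.sqrt (qn q (l - m + 2)) *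
      (Real.sqrt (qn q (2 * l + 1)))⁻¹ * (Real.sqrt (qn q (2 * l + 2)))⁻¹ * alphaN q t N (l + 1)
  else if i = -1 ∧ ν = 0 then
    q ^ m * Real.sqrt (qn q (l - m + 1)) * Real.sqrt (qn q (l + m)) * Real.sqrt (qn q 2) *
      (qn q (2 * l))⁻¹ * betaN q t N l
  else if i = -1 ∧ ν = -1 then
    -(q ^ (-l + m - 1)) * Real.sqrt (qn q (l + m - 1)) * Real.sqrt (qn q (l + m)) *
      (Real.sqrt (qn q (2 * l - 1)))⁻¹ * (Real.sqrt (qn q (2 * l)))⁻¹ * alphaN q t N l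
  else 0

/-! Writing each q-number as `[y] = q (1 - q^(2y)) / ((1 - q²) q^y)` turns
`α_N(l)² / ((1 + q²)(1 - t))` into a rational function of `x = q^(2l)` (with `b = q^(2N)` as a
parameter) that equals `1` at `x = 0`: a product of factors `1 + O(x)` divided by one that stays
above `(1 - q²)³` for `0 ≤ x ≤ q²`. So it is `1 + O(q^(2l))`, and the square root keeps this
because `|√y - 1| ≤ |y - 1|`. -/

open Real Filter Topology

variable {q t N l : ℝ}

lemma abs_sqrt_sub_one_le (x : ℝ) : |√x - 1| ≤ |x - 1| := by
  rcases lt_or_ge x 0 with hx | hx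
  · rw [sqrt_eq_zero_of_nonpos hx.le, abs_of_neg (by linarith), abs_of_neg (by linarith)]
    linarith
  have h : x - 1 = (√x - 1) * (√x + 1) := by
    linear_combination -sq_sqrt hx
  rw [h, abs_mul]
  exact le_mul_of_one_le_right (abs_nonneg _)
    (by rw [abs_of_nonneg (by positivity)]; linarith [sqrt_nonneg x])

lemma abs_mul_sub_one_le {u v a c x : ℝ} (hu : |u - 1| ≤ a * x) (hv : |v - 1| ≤ c * x)
    (hx0 : 0 ≤ x) (hx1 : x ≤ 1) : |u * v - 1| ≤ (a + c + a * c) * x := by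
  have hax : 0 ≤ a * x := (abs_nonneg _).trans hu
  have hcx : 0 ≤ c * x := (abs_nonneg _).trans hv
  have hprod : |(u - 1) * (v - 1)| ≤ a * c * x := by
    rw [abs_mul]
    calc |u - 1| * |v - 1| ≤ (a * x) * (c * x) := mul_le_mul hu hv (abs_nonneg _) hax
      _ ≤ a * c * x := by
        rcases hx0.eq_or_lt with rfl | hx
        · simp
        · have ha := (mul_nonneg_iff_of_pos_right hx).mp hax
          have hc := (mul_nonneg_iff_of_pos_right hx).mp hcx
          nlinarith [mul_nonneg (mul_nonneg ha hc) hx0]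
  calc |u * v - 1| = |(u - 1) * (v - 1) + (u - 1) + (v - 1)| := by ring_nf
    _ ≤ |(u - 1) * (v - 1)| + |u - 1| + |v - 1| := abs_add_three _ _ _
    _ ≤ (a + c + a * c) * x := by linarith

lemma abs_div_sub_one_le {u v a c m x : ℝ} (hu : |u - 1| ≤ a * x) (hv : |v - 1| ≤ c * x)
    (hm : 0 < m) (hmv : m ≤ v) : |u / v - 1| ≤ (a + c) / m * x := by
  have hv0 : 0 < v := hm.trans_le hmv
  have hdiff : |u - v| ≤ (a + c) * x := by
    calc |u - v| = |(u - 1) - (v - 1)| := by ring_nf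
      _ ≤ |u - 1| + |v - 1| := abs_sub _ _
      _ ≤ (a + c) * x := by linarith
  rw [div_sub_one hv0.ne', abs_div, abs_of_pos hv0, div_mul_eq_mul_div]
  exact div_le_div₀ ((abs_nonneg _).trans hdiff) hdiff hm hmv

lemma rpow_two_mul (hq : 0 < q) (y : ℝ) : q ^ (2 * y) = (q ^ y) ^ 2 := by
  rw [mul_comm, rpow_mul hq.le, rpow_two]

lemma qn_eq (hq0 : 0 < q) (hq1 : q ≠ 1) (y : ℝ) :
    qn q y = q * (1 - (q ^ y) ^ 2) / ((1 - q ^ 2) * q ^ y) := by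
  have hy : q ^ y ≠ 0 := (rpow_pos_of_pos hq0 y).ne'
  have hq2 : 1 - q ^ 2 ≠ 0 := by
    intro h
    have : (q - 1) * (q + 1) = 0 := by linear_combination -h
    rcases mul_eq_zero.mp this with h | h
    · exact hq1 (by linarith)
    · linarith
  have hq : q - q⁻¹ ≠ 0 := by
    rw [sub_ne_zero]; intro h; field_simp at h; exact hq2 (by linarith)
  rw [qn, rpow_neg hq0.le, div_eq_div_iff hq (mul_ne_zero hq2 hy)]
  field_simp
  ring

lemma qn_nonneg (hq0 : 0 < q) (hq1 : q < 1) {y : ℝ} (hy : 0 ≤ y) : 0 ≤ qn q y := by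
  have hy0 : 0 < q ^ y := rpow_pos_of_pos hq0 y
  have hy1 : q ^ y ≤ 1 := rpow_le_one hq0.le hq1.le hy
  rw [qn_eq hq0 hq1.ne]
  have : 0 < 1 - q ^ 2 := by nlinarith
  have : 0 ≤ 1 - (q ^ y) ^ 2 := by nlinarith
  positivity

lemma qn_pos (hq0 : 0 < q) (hq1 : q < 1) {y : ℝ} (hy : 0 < y) : 0 < qn q y := by
  have hy0 : 0 < q ^ y := rpow_pos_of_pos hq0 y
  have hy1 : q ^ y < 1 := rpow_lt_one hq0.le hq1 hy
  rw [qn_eq hq0 hq1.ne]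
  have : 0 < 1 - q ^ 2 := by nlinarith
  have : 0 < 1 - (q ^ y) ^ 2 := by nlinarith
  positivity

lemma qn_two_mul (hq : 0 < q) (y : ℝ) : qn q (2 * y) = qn q y * (q ^ y + q ^ (-y)) := by
  rw [qn, qn, mul_comm 2 y, ← neg_mul, rpow_mul hq.le, rpow_mul hq.le, rpow_two, rpow_two]
  ring

lemma qn_ratio_eq (hq0 : 0 < q) (hq1 : q < 1) (hl0 : 0 < l) :
    qn q 2 * qn q (l + N) * qn q (l - N) * qn q (2 * l) / (qn q (2 * l + 1) * qn q l ^ 2) =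
      (1 + q ^ 2) * ((1 - q ^ (2 * l) * q ^ (2 * N)) * (1 - q ^ (2 * l) / q ^ (2 * N)) *
        (1 - (q ^ (2 * l)) ^ 2) / ((1 - q ^ 2 * (q ^ (2 * l)) ^ 2) * (1 - q ^ (2 * l)) ^ 2)) := by
  have hr : 0 < q ^ l := rpow_pos_of_pos hq0 l
  have hs : 0 < q ^ N := rpow_pos_of_pos hq0 N
  have hr1 : q ^ l < 1 := rpow_lt_one hq0.le hq1 hl0
  have hq2 : 0 < 1 - q ^ 2 := by nlinarith
  simp only [qn_eq hq0 hq1.ne, rpow_two, rpow_one, rpow_add hq0, rpow_sub hq0,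
    rpow_two_mul hq0]
  generalize q ^ l = r at *
  generalize q ^ N = s at *
  have : 0 < q * r ^ 2 := by positivity
  have : q * r ^ 2 < 1 := by nlinarith
  have : 1 - q ^ 2 * (r ^ 2) ^ 2 ≠ 0 := by nlinarith
  have : 1 - (r ^ 2 * q) ^ 2 ≠ 0 := by nlinarith
  have : 1 - r ^ 2 ≠ 0 := by nlinarith
  field_simp
  ring

def alphaSqRatio (q t b x : ℝ) : ℝ :=
  (1 - x * b) * (1 - x / b) * (1 - x ^ 2) / ((1 - q ^ 2 * x ^ 2) * (1 - x) ^ 2) *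
    (1 + (t - 1 + b) ^ 2 / ((1 - t) * b) * (x / (1 + x) ^ 2))

lemma alphaN_sq_eq (hq0 : 0 < q) (hq1 : q < 1) (ht1 : t < 1) (hl0 : 0 < l) (hl : |N| ≤ l) :
    alphaN q t N l ^ 2 =
      (1 + q ^ 2) * (1 - t) * alphaSqRatio q t (q ^ (2 * N)) (q ^ (2 * l)) := by
  obtain ⟨hNl, hNl'⟩ := abs_le.mp hl
  have := qn_nonneg hq0 hq1 (show (0 : ℝ) ≤ 2 by norm_num)
  have := qn_nonneg hq0 hq1 (show 0 ≤ l + N by linarith)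
  have := qn_nonneg hq0 hq1 (show 0 ≤ l - N by linarith)
  have := qn_nonneg hq0 hq1 (show 0 ≤ 2 * l by linarith)
  have := qn_nonneg hq0 hq1 (show 0 ≤ 2 * l + 1 by linarith)
  have : 0 < q ^ (-(2 * N)) := rpow_pos_of_pos hq0 _
  have : 0 ≤ q ^ (-(2 * N)) * ((qn q (2 * l))⁻¹) ^ 2 * qn q l ^ 2 *
      (t - 1 + q ^ (2 * N)) ^ 2 := by positivity
  have hD : 1 - t + q ^ (-(2 * N)) * ((qn q (2 * l))⁻¹) ^ 2 * qn q l ^ 2 *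
      (t - 1 + q ^ (2 * N)) ^ 2 = (1 - t) * (1 + (t - 1 + q ^ (2 * N)) ^ 2 /
        ((1 - t) * q ^ (2 * N)) * (q ^ (2 * l) / (1 + q ^ (2 * l)) ^ 2)) := by
    have := (qn_pos hq0 hq1 hl0).ne'
    have : 1 - t ≠ 0 := by linarith
    rw [qn_two_mul hq0, rpow_neg hq0.le, rpow_neg hq0.le, rpow_two_mul hq0, rpow_two_mul hq0]
    have := (rpow_pos_of_pos hq0 l).ne'
    have := (rpow_pos_of_pos hq0 N).ne'
    field_simp
    ring
  rw [alphaN, mul_pow, div_pow, mul_pow, sq_sqrt (by positivity), sq_sqrt (by positivity),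
    sq_sqrt (by linarith), qn_ratio_eq hq0 hq1 hl0, hD, alphaSqRatio]
  ring

lemma alphaN_nonneg (hq0 : 0 < q) (hq1 : q < 1) (hl : 0 ≤ l) : 0 ≤ alphaN q t N l := by
  have := qn_nonneg hq0 hq1 hl
  unfold alphaN
  positivity

lemma alphaN_mul_inv_sqrt_eq (hq0 : 0 < q) (hq1 : q < 1) (ht1 : t < 1) (hl0 : 0 < l)
    (hl : |N| ≤ l) :
    alphaN q t N l * (√((1 + q ^ 2) * (1 - t)))⁻¹ =
      √(alphaSqRatio q t (q ^ (2 * N)) (q ^ (2 * l))) := by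
  have hE : 0 < (1 + q ^ 2) * (1 - t) := mul_pos (by positivity) (by linarith)
  rw [← sqrt_sq (alphaN_nonneg hq0 hq1 hl0.le), ← sqrt_inv, ← sqrt_mul (sq_nonneg _),
    alphaN_sq_eq hq0 hq1 ht1 hl0 hl, mul_right_comm, mul_inv_cancel₀ hE.ne', one_mul]

lemma exists_abs_alphaSqRatio_sub_one_le (hq0 : 0 < q) (hq1 : q < 1) (ht1 : t < 1) {b : ℝ}
    (hb : 0 < b) : ∃ C, ∀ x, 0 ≤ x → x ≤ q ^ 2 → |alphaSqRatio q t b x - 1| ≤ C * x := by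
  -- `?C` is fixed by unification with the final estimate.
  refine ⟨?C, fun x hx0 hxq => ?bound⟩
  case bound =>
    have hq2 : q ^ 2 < 1 := by nlinarith
    have hx1 : x ≤ 1 := by linarith
    have hx2 : x ^ 2 ≤ x := by nlinarith
    have one_sub (c y : ℝ) (hy : 0 ≤ y) (hyx : y ≤ c * x) :
        |1 - y - 1| ≤ c * x := by
      rwa [sub_sub_cancel_left, abs_neg, abs_of_nonneg hy]
    have hNum := abs_mul_sub_one_le
      (abs_mul_sub_one_le (one_sub b (x * b) (by positivity) (mul_comm x b).le)
        (one_sub b⁻¹ (x / b) (by positivity) (div_eq_inv_mul x b).le) hx0 hx1)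
      (one_sub 1 (x ^ 2) (by positivity) (by linarith)) hx0 hx1
    have hDen := abs_mul_sub_one_le
      (one_sub (q ^ 2) (q ^ 2 * x ^ 2) (by positivity) (by nlinarith))
      (abs_mul_sub_one_le (one_sub 1 x hx0 (by linarith)) (one_sub 1 x hx0 (by linarith))
        hx0 hx1) hx0 hx1
    have hDen_ge : (1 - q ^ 2) ^ 3 ≤ (1 - q ^ 2 * x ^ 2) * ((1 - x) * (1 - x)) := by
      have h1 : 1 - q ^ 2 ≤ 1 - q ^ 2 * x ^ 2 := by nlinarith
      have h2 : 1 - q ^ 2 ≤ 1 - x := by linarith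
      have h3 : 0 ≤ 1 - q ^ 2 := by linarith
      calc (1 - q ^ 2) ^ 3 = (1 - q ^ 2) * ((1 - q ^ 2) * (1 - q ^ 2)) := by ring
        _ ≤ _ := by gcongr; linarith
    have hP := abs_div_sub_one_le hNum hDen (by positivity) hDen_ge
    have hG : |1 + (t - 1 + b) ^ 2 / ((1 - t) * b) * (x / (1 + x) ^ 2) - 1| ≤
        (t - 1 + b) ^ 2 / ((1 - t) * b) * x := by
      have hK : 0 ≤ (t - 1 + b) ^ 2 / ((1 - t) * b) :=
        div_nonneg (sq_nonneg _) (mul_pos (by linarith) hb).le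
      rw [add_sub_cancel_left, abs_of_nonneg (by positivity)]
      exact mul_le_mul_of_nonneg_left (div_le_self hx0 (one_le_pow₀ (by linarith))) hK
    rw [alphaSqRatio, sq (1 - x)]
    exact abs_mul_sub_one_le hP hG hx0 hx1

lemma exists_abs_alphaN_mul_inv_sqrt_sub_one_le (hq0 : 0 < q) (hq1 : q < 1) (ht1 : t < 1)
    (N : ℝ) : ∃ C, 0 ≤ C ∧ ∀ l, max |N| 1 ≤ l →
      |alphaN q t N l * (√((1 + q ^ 2) * (1 - t)))⁻¹ - 1| ≤ C * q ^ (2 * l) := by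
  obtain ⟨C, hC⟩ :=
    exists_abs_alphaSqRatio_sub_one_le hq0 hq1 ht1 (rpow_pos_of_pos hq0 (2 * N))
  refine ⟨max C 0, le_max_right _ _, fun l hl => ?_⟩
  have hl1 : 1 ≤ l := (le_max_right _ _).trans hl
  have hx0 : 0 ≤ q ^ (2 * l) := (rpow_pos_of_pos hq0 _).le
  have hxq : q ^ (2 * l) ≤ q ^ 2 := by
    rw [← rpow_two]; exact rpow_le_rpow_of_exponent_ge hq0 hq1.le (by linarith)
  rw [alphaN_mul_inv_sqrt_eq hq0 hq1 ht1 (by linarith) ((le_max_left _ _).trans hl)]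
  calc _ ≤ |alphaSqRatio q t (q ^ (2 * N)) (q ^ (2 * l)) - 1| := abs_sqrt_sub_one_le _
    _ ≤ C * q ^ (2 * l) := hC _ hx0 hxq
    _ ≤ max C 0 * q ^ (2 * l) := by gcongr; exact le_max_left _ _

theorem statement6_general (q t : ℝ) (hq0 : 0 < q) (hq1 : q < 1) (ht1 : t < 1) (N : ℝ) :
    (∃ C : ℝ, 0 ≤ C ∧ ∀ l : ℝ, max |N| 1 ≤ l →
        |alphaN q t N l * (Real.sqrt ((1 + q ^ 2) * (1 - t)))⁻¹ - 1| ≤ C * q ^ (2 * l)) ∧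
    Filter.Tendsto (fun l : ℝ => alphaN q t N l) Filter.atTop
      (nhds (Real.sqrt ((1 + q ^ 2) * (1 - t)))) := by
  obtain ⟨C, hC0, hC⟩ := exists_abs_alphaN_mul_inv_sqrt_sub_one_le hq0 hq1 ht1 N
  refine ⟨⟨C, hC0, hC⟩, ?_⟩
  set s := √((1 + q ^ 2) * (1 - t))
  have hs : 0 < s := sqrt_pos.mpr (mul_pos (by positivity) (by linarith))
  have hq2l : Tendsto (fun l : ℝ => C * q ^ (2 * l)) atTop (𝓝 0) := by
    simpa using ((tendsto_rpow_atTop_of_base_lt_one q (by linarith) hq1).comp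
      (tendsto_id.const_mul_atTop two_pos)).const_mul C
  have hratio : Tendsto (fun l => alphaN q t N l * s⁻¹ - 1) atTop (𝓝 0) := by
    refine squeeze_zero_norm' ?_ hq2l
    filter_upwards [eventually_ge_atTop (max |N| 1)] with l hl using hC l hl
  simpa [hs.ne'] using (hratio.add_const 1).mul_const s

/-- `|α_N(l) ((1+q²)(1−t))^{−1/2} − 1| ≤ C q^{2l}`, and
`α_N(l) → ((1+q²)(1−t))^{1/2}` as `l → ∞`. -/
theorem statement6 (q t : ℝ) (hq0 : 0 < q) (hq1 : q < 1) (ht0 : 0 ≤ t) (ht1 : t < 1)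
    (N : ℝ) (hN : ∃ n : ℤ, N = (n : ℝ) / 2) :
    (∃ C : ℝ, 0 ≤ C ∧ ∀ l : ℝ, max |N| 1 ≤ l →
        |alphaN q t N l * (Real.sqrt ((1 + q ^ 2) * (1 - t)))⁻¹ - 1| ≤ C * q ^ (2 * l)) ∧
    Filter.Tendsto (fun l : ℝ => alphaN q t N l) Filter.atTop
      (nhds (Real.sqrt ((1 + q ^ 2) * (1 - t)))) :=
  statement6_general q t hq0 hq1 ht1 N

end Podles
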